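/- Let (X₁, X₂) be a pair of identically distributed log-normal random variables, X₁ ≍ X₂ ~ LN(μ, σ²), with aggregate loss function φ⁻(u) = F_{X₁}^{-1}(u) + F_{X₁}^{-1}(1 − u) on (0,1). Then φ⁻ satisfies φ⁻(u) = φ⁻(1 − u) for all u ∈ (0,1), φ⁻ is strictly decreasing on (0, 1/2) and strictly increasing on (1/2, 1), and the counter-monotonic sum S⁻ satisfies F_{S⁻}^{-1}(1 − q) = F_{X₁}^{-1}(q/2) + F_{X₁}^{-1}(1 − q/2) for all q ∈ (0,1). -/

import Mathlib

open MeasureTheory ProbabilityTheory Set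

noncomputable section

variable {Ω : Type*} [MeasurableSpace Ω]

/-- The cumulative distribution function of the random variable `X` under `P`. -/
def rvCdf (P : Measure Ω) (X : Ω → ℝ) : ℝ → ℝ := fun x => (P {ω | X ω ≤ x}).toReal

/-- The survival function `x ↦ P(X > x)`. -/
def rvSurv (P : Measure Ω) (X : Ω → ℝ) : ℝ → ℝ := fun x => (P {ω | x < X ω}).toReal

/-- The left inverse `F⁻¹(p) = inf {x | F x ≥ p}` of a cdf `F`. -/
def leftInv (F : ℝ → ℝ) (p : ℝ) : ℝ := sInf {x | p ≤ F x}

/-- The right inverse `F⁻¹⁺(p) = sup {x | F x ≤ p}` of a cdf `F`. -/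
def rightInv (F : ℝ → ℝ) (p : ℝ) : ℝ := sSup {x | F x ≤ p}

/-- `g : [0,1] → [0,1]` is a distortion function: nondecreasing with `g 0 = 0`, `g 1 = 1`. -/
def IsDistortion (g : ℝ → ℝ) : Prop :=
  MonotoneOn g (Icc 0 1) ∧ g 0 = 0 ∧ g 1 = 1 ∧ ∀ q ∈ Icc (0:ℝ) 1, g q ∈ Icc (0:ℝ) 1

/-- The dual distortion function `ḡ(q) = 1 - g(1 - q)`. -/
def dualDistortion (g : ℝ → ℝ) : ℝ → ℝ := fun q => 1 - g (1 - q)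

/-- The distortion risk measure
`ρ_g[X] = -∫_{-∞}^0 (1 - g(P(X > x))) dx + ∫_0^∞ g(P(X > x)) dx`. -/
def rho (P : Measure Ω) (g : ℝ → ℝ) (X : Ω → ℝ) : ℝ :=
  (- ∫ x in Iio (0:ℝ), (1 - g (rvSurv P X x))) + ∫ x in Ioi (0:ℝ), g (rvSurv P X x)

/-- The two integrals defining the distortion risk measure `ρ_g[X]` are finite. -/
def RhoFinite (P : Measure Ω) (g : ℝ → ℝ) (X : Ω → ℝ) : Prop :=
  IntegrableOn (fun x => 1 - g (rvSurv P X x)) (Iio (0:ℝ)) volume ∧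
  IntegrableOn (fun x => g (rvSurv P X x)) (Ioi (0:ℝ)) volume

/-- `U` is uniformly distributed on `[0,1]`. -/
def IsUniform01 (P : Measure Ω) (U : Ω → ℝ) : Prop :=
  Measurable U ∧ Measure.map U P = volume.restrict (Icc (0:ℝ) 1)

/-- The counter-monotonic sum `S⁻ = F_{X₁}⁻¹(U) + F_{X₂}⁻¹(1 - U)`. -/
def cmSum (P : Measure Ω) (X₁ X₂ : Ω → ℝ) (U : Ω → ℝ) : Ω → ℝ :=
  fun ω => leftInv (rvCdf P X₁) (U ω) + leftInv (rvCdf P X₂) (1 - U ω)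

/-- `X` is symmetric: for some `m`, `P(X ≤ m - x) = P(X ≥ m + x)` for all `x`. -/
def IsSymmetricRV (P : Measure Ω) (X : Ω → ℝ) : Prop :=
  ∃ m : ℝ, ∀ x : ℝ, P {ω | X ω ≤ m - x} = P {ω | m + x ≤ X ω}

/-- Dispersive order `X ≤_disp Y`. -/
def DispLE (P : Measure Ω) (X Y : Ω → ℝ) : Prop :=
  ∀ u v : ℝ, 0 < v → v ≤ u → u < 1 →
    leftInv (rvCdf P X) u - leftInv (rvCdf P X) v ≤
      leftInv (rvCdf P Y) u - leftInv (rvCdf P Y) v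

/-- The cdf of `X` is continuous and strictly increasing on `(F⁻¹⁺(0), F⁻¹(1))`. -/
def CdfRegular (P : Measure Ω) (X : Ω → ℝ) : Prop :=
  ContinuousOn (rvCdf P X) (Ioo (rightInv (rvCdf P X) 0) (leftInv (rvCdf P X) 1)) ∧
  StrictMonoOn (rvCdf P X) (Ioo (rightInv (rvCdf P X) 0) (leftInv (rvCdf P X) 1))

/-- Value-at-Risk `VaR_p[X] = F_X⁻¹(p)`. -/
def VaR (P : Measure Ω) (X : Ω → ℝ) (p : ℝ) : ℝ := leftInv (rvCdf P X) p

/-- Tail-Value-at-Risk `TVaR_p[X] = (1/(1-p)) ∫_p^1 F_X⁻¹(q) dq`. -/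
def TVaR (P : Measure Ω) (X : Ω → ℝ) (p : ℝ) : ℝ :=
  (1 - p)⁻¹ * ∫ q in p..1, leftInv (rvCdf P X) q

/-- Left-Tail-Value-at-Risk `LTVaR_p[X] = (1/p) ∫_0^p F_X⁻¹(q) dq`. -/
def LTVaR (P : Measure Ω) (X : Ω → ℝ) (p : ℝ) : ℝ :=
  p⁻¹ * ∫ q in (0:ℝ)..p, leftInv (rvCdf P X) q

/-- The standard normal cdf `Φ`. -/
def stdNormCdf : ℝ → ℝ := fun x => ((gaussianReal 0 1) (Iic x)).toReal

/-- The inverse `Φ⁻¹` of the standard normal cdf. -/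
def stdNormInv : ℝ → ℝ := fun p => sInf {x | p ≤ stdNormCdf x}

/-- The Wang transform distortion function at level `p`. -/
def wangG (p : ℝ) : ℝ → ℝ := fun q => stdNormCdf (stdNormInv q + stdNormInv p)

/-- The Wang transform risk measure at level `p`. -/
def WT (P : Measure Ω) (X : Ω → ℝ) (p : ℝ) : ℝ := rho P (wangG p) X

/-- `X ~ N(μ, σ²)`. -/
def IsNormalRV (P : Measure Ω) (X : Ω → ℝ) (μ σ : ℝ) : Prop :=
  Measurable X ∧ Measure.map X P = gaussianReal μ (⟨σ ^ 2, sq_nonneg σ⟩ : NNReal)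

/-- `X ~ LN(μ, σ²)`, i.e. `X` is distributed as `exp Z` with `Z ~ N(μ, σ²)`. -/
def IsLogNormalRV (P : Measure Ω) (X : Ω → ℝ) (μ σ : ℝ) : Prop :=
  Measurable X ∧
    Measure.map X P = Measure.map Real.exp (gaussianReal μ (⟨σ ^ 2, sq_nonneg σ⟩ : NNReal))

/-- `X ~ Student(ν)`: density proportional to `(1 + x²/ν)^(-(ν+1)/2)`. -/
def IsStudentRV (P : Measure Ω) (X : Ω → ℝ) (ν : ℝ) : Prop :=
  Measurable X ∧ ∃ c : ℝ, 0 < c ∧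
    Measure.map X P =
      volume.withDensity (fun x => ENNReal.ofReal (c * (1 + x ^ 2 / ν) ^ (-((ν + 1) / 2))))

/-- Extension of a distortion function to `ℝ` by constants. -/
def gExt (g : ℝ → ℝ) : ℝ → ℝ := fun q => if q ≤ 0 then 0 else if 1 ≤ q then 1 else g q

open Classical in
/-- The Lebesgue–Stieltjes measure `dg` associated with (the right-continuous modification of)
the extension of a distortion function `g` to `ℝ`. -/
def lsMeasure (g : ℝ → ℝ) : Measure ℝ :=
  if h : Monotone (gExt g) then h.stieltjesFunction.measure else 0


/-! With `Φ` the standard normal cdf, the `LN(μ, σ²)` quantile is `u ↦ exp (μ + σ Φ⁻¹ u)` and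
`Φ⁻¹ (1 - u) = -Φ⁻¹ u`, so `φ⁻ u = 2 e^μ cosh (σ Φ⁻¹ u)`: symmetric about `1/2`, decreasing on
`(0, 1/2]` and increasing on `[1/2, 1)`. For such a function of a uniform `U`, the event
`φ⁻ U ≤ φ⁻ (q/2)` contains `U ∈ [q/2, 1 - q/2]`, of probability `1 - q`, while by continuity any
lower level `s` is already below `φ⁻ a` for some `a > q/2`, so that `P(φ⁻ U ≤ s) ≤ 1 - 2a < 1 - q`.
-/

open Filter Topology

lemma ProbabilityTheory.continuous_cdf (μ : Measure ℝ) [IsProbabilityMeasure μ]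
    [NullSingletonClass μ] : Continuous (cdf μ) := by
  refine continuous_iff_continuousAt.2 fun a =>
    continuousAt_iff_continuous_left_right.2 ⟨?_, (cdf μ).right_continuous a⟩
  rw [← continuousWithinAt_Iio_iff_Iic, (monotone_cdf μ).continuousWithinAt_Iio_iff_leftLim_eq]
  have h := (cdf μ).measure_singleton a
  rw [measure_cdf, measure_singleton, eq_comm, ENNReal.ofReal_eq_zero, sub_nonpos] at h
  exact le_antisymm ((monotone_cdf μ).leftLim_le le_rfl) h

lemma ProbabilityTheory.strictMono_cdf (μ : Measure ℝ) [IsProbabilityMeasure μ]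
    (h : volume ≪ μ) : StrictMono (cdf μ) := by
  intro x y hxy
  have hpos : 0 < μ (Ioc x y) :=
    pos_iff_ne_zero.2 fun h0 => hxy.not_ge (by simpa using h h0)
  rw [← measure_cdf μ, (cdf μ).measure_Ioc, ENNReal.ofReal_pos] at hpos
  linarith

lemma leftInv_eq_of_forall_le_iff {F : ℝ → ℝ} {p c : ℝ} (h : ∀ x, p ≤ F x ↔ c ≤ x) :
    leftInv F p = c := by
  rw [leftInv, show {x | p ≤ F x} = Ici c from Set.ext h]
  exact csInf_Ici

lemma stdNormCdf_eq_cdf : stdNormCdf = cdf (gaussianReal 0 1) := by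
  ext x
  rw [cdf_eq_real, measureReal_def]
  rfl

lemma continuous_stdNormCdf : Continuous stdNormCdf := by
  have := nullSingletonClass_gaussianReal (μ := 0) one_ne_zero
  rw [stdNormCdf_eq_cdf]
  exact continuous_cdf _

lemma strictMono_stdNormCdf : StrictMono stdNormCdf := by
  rw [stdNormCdf_eq_cdf]
  exact strictMono_cdf _ (gaussianReal_absolutelyContinuous' 0 one_ne_zero)

lemma stdNormCdf_mem_Ioo (x : ℝ) : stdNormCdf x ∈ Ioo 0 1 := by
  have h₀ := strictMono_stdNormCdf (sub_one_lt x)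
  have h₁ := strictMono_stdNormCdf (lt_add_one x)
  rw [stdNormCdf_eq_cdf] at *
  exact ⟨(cdf_nonneg _ _).trans_lt h₀, h₁.trans_le (cdf_le_one _ _)⟩

lemma stdNormCdf_neg (x : ℝ) : stdNormCdf (-x) = 1 - stdNormCdf x := by
  have := nullSingletonClass_gaussianReal (μ := 0) one_ne_zero
  have hneg : (gaussianReal 0 1).map (fun z => -z) = gaussianReal 0 1 := by
    rw [gaussianReal_map_neg, neg_zero]
  simp only [stdNormCdf_eq_cdf, cdf_eq_real]
  conv_lhs => rw [← hneg]
  rw [map_measureReal_apply measurable_neg measurableSet_Iic,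
    show (fun z : ℝ => -z) ⁻¹' Iic (-x) = (Iio x)ᶜ by ext; simp,
    measureReal_compl measurableSet_Iio, probReal_univ, measureReal_congr Iio_ae_eq_Iic]

lemma stdNormCdf_zero : stdNormCdf 0 = 1 / 2 := by
  linarith [neg_zero (G := ℝ) ▸ stdNormCdf_neg 0]

lemma exists_stdNormCdf_eq {p : ℝ} (hp : p ∈ Ioo 0 1) : ∃ x, stdNormCdf x = p := by
  have hbot : Tendsto stdNormCdf atBot (𝓝 0) := stdNormCdf_eq_cdf ▸ tendsto_cdf_atBot _
  have htop : Tendsto stdNormCdf atTop (𝓝 1) := stdNormCdf_eq_cdf ▸ tendsto_cdf_atTop _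
  exact mem_range_of_exists_le_of_exists_ge continuous_stdNormCdf
    ((hbot.eventually (gt_mem_nhds hp.1)).exists.imp fun _ => le_of_lt)
    ((htop.eventually (lt_mem_nhds hp.2)).exists.imp fun _ => le_of_lt)

lemma stdNormInv_stdNormCdf (x : ℝ) : stdNormInv (stdNormCdf x) = x :=
  leftInv_eq_of_forall_le_iff fun _ => strictMono_stdNormCdf.le_iff_le

lemma stdNormCdf_stdNormInv {p : ℝ} (hp : p ∈ Ioo 0 1) : stdNormCdf (stdNormInv p) = p := by
  obtain ⟨x, rfl⟩ := exists_stdNormCdf_eq hp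
  rw [stdNormInv_stdNormCdf]

lemma strictMonoOn_stdNormInv : StrictMonoOn stdNormInv (Ioo 0 1) := fun p hp q hq hpq => by
  rwa [← strictMono_stdNormCdf.lt_iff_lt, stdNormCdf_stdNormInv hp, stdNormCdf_stdNormInv hq]

lemma stdNormInv_one_sub {p : ℝ} (hp : p ∈ Ioo 0 1) : stdNormInv (1 - p) = -stdNormInv p := by
  obtain ⟨x, rfl⟩ := exists_stdNormCdf_eq hp
  rw [← stdNormCdf_neg, stdNormInv_stdNormCdf, stdNormInv_stdNormCdf]

lemma stdNormInv_half : stdNormInv (1 / 2) = 0 := by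
  rw [← stdNormCdf_zero, stdNormInv_stdNormCdf]

lemma continuousOn_stdNormInv : ContinuousOn stdNormInv (Ioo 0 1) := fun _ hp =>
  (continuousAt_of_monotoneOn_of_image_mem_nhds strictMonoOn_stdNormInv.monotoneOn
    (Ioo_mem_nhds hp.1 hp.2) (univ_mem' fun x =>
      ⟨stdNormCdf x, stdNormCdf_mem_Ioo x, stdNormInv_stdNormCdf x⟩)).continuousWithinAt

lemma leftInv_stdNormal_preimage_Iic {e : ℝ → ℝ} (he : StrictMono e) (hc : Continuous e)
    {p : ℝ} (hp : p ∈ Ioo 0 1) :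
    leftInv (fun x => (gaussianReal 0 1 (e ⁻¹' Iic x)).toReal) p = e (stdNormInv p) := by
  refine leftInv_eq_of_forall_le_iff fun x => ⟨fun hx => ?_, fun hx => ?_⟩
  · by_contra! hlt
    have hev : ∀ᶠ z in 𝓝[<] stdNormInv p, x < e z :=
      ((hc.tendsto _).mono_left nhdsWithin_le_nhds).eventually (lt_mem_nhds hlt)
    obtain ⟨z, hxz, hz⟩ := (hev.and self_mem_nhdsWithin).exists
    have hsub : e ⁻¹' Iic x ⊆ Iic z := fun y hy => (he.lt_iff_lt.1 (lt_of_le_of_lt hy hxz)).le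
    have hle :=
      ENNReal.toReal_mono (measure_ne_top _ _) (measure_mono (μ := gaussianReal 0 1) hsub)
    have hzp := stdNormCdf_stdNormInv hp ▸ strictMono_stdNormCdf hz
    exact (hx.trans hle).not_gt hzp
  · have hsub : Iic (stdNormInv p) ⊆ e ⁻¹' Iic x := fun y hy => (he.monotone hy).trans hx
    calc p = stdNormCdf (stdNormInv p) := (stdNormCdf_stdNormInv hp).symm
      _ ≤ _ := ENNReal.toReal_mono (measure_ne_top _ _) (measure_mono hsub)

lemma gaussianReal_map_const_add_mul (μ σ : ℝ) :
    (gaussianReal 0 1).map (fun z => μ + σ * z) = gaussianReal μ ⟨σ ^ 2, sq_nonneg σ⟩ := by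
  rw [show (fun z : ℝ => μ + σ * z) = (μ + ·) ∘ (σ * ·) from rfl,
    ← Measure.map_map (measurable_const_add μ) (measurable_const_mul σ),
    gaussianReal_map_const_mul, gaussianReal_map_const_add, mul_zero, zero_add, mul_one]
  rfl

/-- The aggregate loss function `φ⁻` of two `LN(μ, σ²)` risks, in closed form. -/
def lognormalAggregate (μ σ u : ℝ) : ℝ := 2 * Real.exp μ * Real.cosh (σ * stdNormInv u)

namespace IsLogNormalRV

variable {P : Measure Ω} {X : Ω → ℝ} {μ σ : ℝ}

lemma rvCdf_eq (hX : IsLogNormalRV P X μ σ) (x : ℝ) :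
    rvCdf P X x =
      (gaussianReal 0 1 ((fun z => Real.exp (μ + σ * z)) ⁻¹' Iic x)).toReal := by
  change (P (X ⁻¹' Iic x)).toReal = _
  rw [← Measure.map_apply hX.1 measurableSet_Iic, hX.2,
    ← gaussianReal_map_const_add_mul, Measure.map_map Real.measurable_exp (by fun_prop),
    Measure.map_apply (by fun_prop) measurableSet_Iic]
  rfl

lemma leftInv_rvCdf (hσ : 0 < σ) (hX : IsLogNormalRV P X μ σ) {p : ℝ} (hp : p ∈ Ioo 0 1) :
    leftInv (rvCdf P X) p = Real.exp (μ + σ * stdNormInv p) := by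
  rw [funext hX.rvCdf_eq]
  exact leftInv_stdNormal_preimage_Iic
    (Real.exp_strictMono.comp ((strictMono_mul_left_of_pos hσ).const_add μ)) (by fun_prop) hp

lemma leftInv_add_leftInv_one_sub (hσ : 0 < σ) (hX : IsLogNormalRV P X μ σ) {u : ℝ}
    (hu : u ∈ Ioo 0 1) :
    leftInv (rvCdf P X) u + leftInv (rvCdf P X) (1 - u) = lognormalAggregate μ σ u := by
  have hu' : 1 - u ∈ Ioo (0 : ℝ) 1 := ⟨sub_pos.2 hu.2, sub_lt_self 1 hu.1⟩
  rw [hX.leftInv_rvCdf hσ hu, hX.leftInv_rvCdf hσ hu', stdNormInv_one_sub hu, lognormalAggregate,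
    Real.cosh_eq, mul_neg, Real.exp_add, Real.exp_add]
  ring

end IsLogNormalRV

lemma lognormalAggregate_one_sub (μ σ : ℝ) {u : ℝ} (hu : u ∈ Ioo 0 1) :
    lognormalAggregate μ σ (1 - u) = lognormalAggregate μ σ u := by
  rw [lognormalAggregate, lognormalAggregate, stdNormInv_one_sub hu, mul_neg, Real.cosh_neg]

lemma strictAntiOn_lognormalAggregate (μ : ℝ) {σ : ℝ} (hσ : 0 < σ) :
    StrictAntiOn (lognormalAggregate μ σ) (Ioc 0 (1 / 2)) := by
  intro u hu v hv huv
  have hv' : v ∈ Ioo (0 : ℝ) 1 := ⟨hv.1, hv.2.trans_lt one_half_lt_one⟩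
  have hzuv := strictMonoOn_stdNormInv ⟨hu.1, hu.2.trans_lt one_half_lt_one⟩ hv' huv
  have hzv : stdNormInv v ≤ 0 := stdNormInv_half ▸
    strictMonoOn_stdNormInv.monotoneOn hv' ⟨one_half_pos, one_half_lt_one⟩ hv.2
  refine mul_lt_mul_of_pos_left (Real.cosh_lt_cosh.2 ?_) (by positivity)
  rw [abs_mul, abs_mul, abs_of_pos hσ, abs_of_nonpos hzv, abs_of_neg (hzuv.trans_le hzv)]
  exact mul_lt_mul_of_pos_left (neg_lt_neg hzuv) hσ

lemma strictMonoOn_lognormalAggregate (μ : ℝ) {σ : ℝ} (hσ : 0 < σ) :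
    StrictMonoOn (lognormalAggregate μ σ) (Ico (1 / 2) 1) := by
  intro u hu v hv huv
  have hu' : u ∈ Ioo (0 : ℝ) 1 := ⟨one_half_pos.trans_le hu.1, hu.2⟩
  have hv' : v ∈ Ioo (0 : ℝ) 1 := ⟨one_half_pos.trans_le hv.1, hv.2⟩
  rw [← lognormalAggregate_one_sub μ σ hu', ← lognormalAggregate_one_sub μ σ hv']
  exact strictAntiOn_lognormalAggregate μ hσ ⟨sub_pos.2 hv.2, by linarith [hv.1]⟩
    ⟨sub_pos.2 hu.2, by linarith [hu.1]⟩ (by linarith)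

lemma continuousOn_lognormalAggregate (μ σ : ℝ) :
    ContinuousOn (lognormalAggregate μ σ) (Ioo 0 1) :=
  continuousOn_const.mul (Real.continuous_cosh.comp_continuousOn
    (continuousOn_const.mul continuousOn_stdNormInv))

section SymmetricAboutHalf

variable {g : ℝ → ℝ} {u a : ℝ}

lemma min_one_sub_mem_Ioc (hu : u ∈ Ioo 0 1) : min u (1 - u) ∈ Ioc 0 (1 / 2) :=
  ⟨lt_min hu.1 (sub_pos.2 hu.2), by
    rcases le_total u (1 - u) with h | h <;> simp only [min_eq_left, min_eq_right, h] <;> linarith⟩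

lemma apply_min_one_sub (hsymm : ∀ u ∈ Ioo 0 1, g (1 - u) = g u) (hu : u ∈ Ioo 0 1) :
    g (min u (1 - u)) = g u := by
  rcases le_total u (1 - u) with h | h
  · rw [min_eq_left h]
  · rw [min_eq_right h, hsymm u hu]

lemma apply_le_of_le_min_one_sub (hsymm : ∀ u ∈ Ioo 0 1, g (1 - u) = g u)
    (hanti : AntitoneOn g (Ioc 0 (1 / 2))) (ha : 0 < a) (hu : u ∈ Ioo 0 1)
    (h : a ≤ min u (1 - u)) : g u ≤ g a :=
  apply_min_one_sub hsymm hu ▸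
    hanti ⟨ha, h.trans (min_one_sub_mem_Ioc hu).2⟩ (min_one_sub_mem_Ioc hu) h

lemma le_apply_of_min_one_sub_le (hsymm : ∀ u ∈ Ioo 0 1, g (1 - u) = g u)
    (hanti : AntitoneOn g (Ioc 0 (1 / 2))) (ha : a ≤ 1 / 2) (hu : u ∈ Ioo 0 1)
    (h : min u (1 - u) ≤ a) : g a ≤ g u :=
  apply_min_one_sub hsymm hu ▸
    hanti (min_one_sub_mem_Ioc hu) ⟨(min_one_sub_mem_Ioc hu).1.trans_le h, ha⟩ h

end SymmetricAboutHalf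

namespace IsUniform01

variable {P : Measure Ω} {U : Ω → ℝ}

lemma measure_preimage_Icc (hU : IsUniform01 P U) {a b : ℝ} (ha : 0 ≤ a) (hb : b ≤ 1) :
    P (U ⁻¹' Icc a b) = ENNReal.ofReal (b - a) := by
  rw [← Measure.map_apply hU.1 measurableSet_Icc, hU.2, Measure.restrict_apply measurableSet_Icc,
    Icc_inter_Icc, max_eq_left ha, min_eq_left hb, Real.volume_Icc]

lemma ae_mem_Ioo (hU : IsUniform01 P U) : ∀ᵐ ω ∂P, U ω ∈ Ioo 0 1 := by
  refine ae_of_ae_map hU.1.aemeasurable ?_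
  rw [hU.2, ← Measure.restrict_congr_set Ioo_ae_eq_Icc]
  exact ae_restrict_mem measurableSet_Ioo

theorem leftInv_rvCdf_comp [IsFiniteMeasure P] (hU : IsUniform01 P U) {g : ℝ → ℝ}
    (hsymm : ∀ u ∈ Ioo 0 1, g (1 - u) = g u) (hanti : AntitoneOn g (Ioc 0 (1 / 2)))
    {q : ℝ} (hq : q ∈ Ioo 0 1) (hcont : ContinuousWithinAt g (Ioi (q / 2)) (q / 2)) :
    leftInv (rvCdf P fun ω => g (U ω)) (1 - q) = g (q / 2) := by
  refine leftInv_eq_of_forall_le_iff fun s => ⟨fun hs => ?_, fun hs => ?_⟩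
  · by_contra! hlt
    have hev : ∀ᶠ a in 𝓝[>] (q / 2), s < g a := hcont.eventually (lt_mem_nhds hlt)
    obtain ⟨a, hsa, hqa, ha⟩ :=
      (hev.and (Ioo_mem_nhdsGT (show q / 2 < 1 / 2 by linarith [hq.2]))).exists
    have hsub : {ω | g (U ω) ≤ s} ≤ᵐ[P] U ⁻¹' Icc a (1 - a) := by
      filter_upwards [hU.ae_mem_Ioo] with ω hω hle
      have hlt : a < min (U ω) (1 - U ω) := lt_of_not_ge fun h =>
        (hle.trans_lt hsa).not_ge (le_apply_of_min_one_sub_le hsymm hanti ha.le hω h)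
      exact ⟨(lt_min_iff.1 hlt).1.le, by linarith [(lt_min_iff.1 hlt).2]⟩
    have hle : rvCdf P (fun ω => g (U ω)) s ≤ 1 - a - a :=
      ENNReal.toReal_le_of_le_ofReal (by linarith) ((measure_mono_ae hsub).trans_eq
        (hU.measure_preimage_Icc (by linarith [hq.1]) (by linarith [hq.1])))
    linarith
  · have hsub : U ⁻¹' Icc (q / 2) (1 - q / 2) ⊆ {ω | g (U ω) ≤ s} := fun ω hω => by
      have hω' : U ω ∈ Ioo 0 1 := ⟨by linarith [hω.1, hq.1], by linarith [hω.2, hq.1]⟩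
      exact (apply_le_of_le_min_one_sub hsymm hanti (half_pos hq.1) hω'
        (le_min hω.1 (by linarith [hω.2]))).trans hs
    calc 1 - q = (P (U ⁻¹' Icc (q / 2) (1 - q / 2))).toReal := by
          rw [hU.measure_preimage_Icc (half_pos hq.1).le (by linarith [hq.1]),
            ENNReal.toReal_ofReal (by linarith [hq.2])]
          ring
      _ ≤ rvCdf P (fun ω => g (U ω)) s :=
          ENNReal.toReal_mono (measure_ne_top _ _) (measure_mono hsub)

end IsUniform01

/-- shape of the aggregate loss function of two identically distributed
log-normal risks, and the quantile of the counter-monotonic sum. -/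
theorem lognormal_aggregate_loss_shape
    (P : Measure Ω) [IsProbabilityMeasure P]
    (X₁ X₂ U : Ω → ℝ) (μ σ : ℝ) (hσ : 0 < σ)
    (h₁ : IsLogNormalRV P X₁ μ σ) (h₂ : IsLogNormalRV P X₂ μ σ)
    (hU : IsUniform01 P U)
    (φ : ℝ → ℝ)
    (hφ : ∀ u, φ u = leftInv (rvCdf P X₁) u + leftInv (rvCdf P X₂) (1 - u)) :
    (∀ u ∈ Ioo (0:ℝ) 1,
      φ u = leftInv (rvCdf P X₁) u + leftInv (rvCdf P X₁) (1 - u)) ∧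
    (∀ u ∈ Ioo (0:ℝ) 1, φ u = φ (1 - u)) ∧
    StrictAntiOn φ (Ioo 0 (1/2)) ∧
    StrictMonoOn φ (Ioo (1/2) 1) ∧
    (∀ q ∈ Ioo (0:ℝ) 1,
      leftInv (rvCdf P (cmSum P X₁ X₂ U)) (1 - q) =
        leftInv (rvCdf P X₁) (q / 2) + leftInv (rvCdf P X₁) (1 - q / 2)) := by
  have hF : rvCdf P X₂ = rvCdf P X₁ := funext fun x => by rw [h₂.rvCdf_eq, h₁.rvCdf_eq]
  have hφ₁ : ∀ u, φ u = leftInv (rvCdf P X₁) u + leftInv (rvCdf P X₁) (1 - u) := by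
    simpa only [hF] using hφ
  have hφ_eq : EqOn (lognormalAggregate μ σ) φ (Ioo 0 1) := fun u hu => by
    rw [hφ₁, h₁.leftInv_add_leftInv_one_sub hσ hu]
  have hsymm : ∀ u ∈ Ioo (0:ℝ) 1, φ (1 - u) = φ u := fun u hu => by
    rw [← hφ_eq hu, ← hφ_eq ⟨sub_pos.2 hu.2, sub_lt_self 1 hu.1⟩,
      lognormalAggregate_one_sub μ σ hu]
  have hanti : StrictAntiOn φ (Ioc 0 (1 / 2)) := (strictAntiOn_lognormalAggregate μ hσ).congr
    (hφ_eq.mono (Ioc_subset_Ioo_right one_half_lt_one))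
  have hmono : StrictMonoOn φ (Ico (1 / 2) 1) := (strictMonoOn_lognormalAggregate μ hσ).congr
    (hφ_eq.mono (Ico_subset_Ioo_left one_half_pos))
  refine ⟨fun u _ => hφ₁ u, fun u hu => (hsymm u hu).symm, hanti.mono Ioo_subset_Ioc_self,
    hmono.mono Ioo_subset_Ico_self, fun q hq => ?_⟩
  have hq₂ : q / 2 ∈ Ioo (0:ℝ) 1 := ⟨half_pos hq.1, by linarith [hq.2]⟩
  have hcont : ContinuousAt φ (q / 2) :=
    ((continuousOn_lognormalAggregate μ σ).continuousAt (Ioo_mem_nhds hq₂.1 hq₂.2)).congr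
      (hφ_eq.eventuallyEq_of_mem (Ioo_mem_nhds hq₂.1 hq₂.2))
  rw [← hφ₁, show cmSum P X₁ X₂ U = fun ω => φ (U ω) from funext fun ω => (hφ (U ω)).symm]
  exact hU.leftInv_rvCdf_comp hsymm hanti.antitoneOn hq hcont.continuousWithinAt

end
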